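/- Let α > 0 and let f ∈ B₁(α) with Taylor coefficients a₂, a₃. Then |a₃ − a₂²/2| ≥ |a₂| − 2/√((α+1)² + 1). -/

import Mathlib

open Complex Metric

/-- The Bazilevič class `B₁(α)`: `f` is analytic on the unit disk with `f 0 = 0`,
`f' 0 = 1`, and `Re[(f z / z)^(α-1) * f' z] > 0` on the disk, where the power is taken
with the analytic branch equal to `1` at `z = 0`.  The branch is encoded via an analytic
function `h` with `h 0 = 0` and `f z = z * exp (h z)` on the disk (so that
`h = log (f z / z)` and `(f z / z)^(α-1) = exp ((α-1) * h z)`). -/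
def BazilevicB1 (α : ℝ) (f h : ℂ → ℂ) : Prop :=
  AnalyticOnNhd ℂ f (ball 0 1) ∧ AnalyticOnNhd ℂ h (ball 0 1) ∧
  f 0 = 0 ∧ deriv f 0 = 1 ∧ h 0 = 0 ∧
  (∀ z ∈ ball (0 : ℂ) 1, f z = z * Complex.exp (h z)) ∧
  (∀ z ∈ ball (0 : ℂ) 1, 0 < (Complex.exp ((α - 1 : ℂ) * h z) * deriv f z).re)

/-- The first logarithmic coefficient `γ₁`, from `h = log (f z / z) = 2 ∑ γₙ zⁿ`. -/
noncomputable def logCoeff1 (h : ℂ → ℂ) : ℂ := deriv h 0 / 2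

/-- The second logarithmic coefficient `γ₂`, from `h = log (f z / z) = 2 ∑ γₙ zⁿ`. -/
noncomputable def logCoeff2 (h : ℂ → ℂ) : ℂ := iteratedDeriv 2 h 0 / 4

/-- The second Taylor coefficient `a₂` of `f`. -/
noncomputable def coeff2 (f : ℂ → ℂ) : ℂ := iteratedDeriv 2 f 0 / 2

/-- The third Taylor coefficient `a₃` of `f`. -/
noncomputable def coeff3 (f : ℂ → ℂ) : ℂ := iteratedDeriv 3 f 0 / 6

/-!
Write `f z = z e^{h z}`, so that `a₂ = 2γ₁` and `a₃ - a₂²/2 = 2γ₂`. The function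
`p = (f/z)^{α-1} f' = e^{(α-1)h} f'` has positive real part and `p 0 = 1`, so its Cayley
transform `ω = (p - 1)/(p + 1)` is a Schwarz function. Schwarz–Pick applied to `ω z / z`
gives `|ω''(0)/2| ≤ 1 - |ω'(0)|²`, which in terms of `p` reads
`|p''(0) - p'(0)²| ≤ 4 - |p'(0)|²`, that is `|(α+2)γ₂ - γ₁²| ≤ 1 - (α+1)²|γ₁|²`.
By the triangle inequality `s²|γ₁|² - 1 ≤ |α+2||γ₂|` with `s = √((α+1)²+1)`, and as
`|α+2| ≤ 2s` this forces `|γ₂| ≥ |γ₁| - 1/s`.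
-/

open ComplexConjugate Set

section
variable {𝕜 : Type*} [NontriviallyNormedField 𝕜] {u v : 𝕜 → 𝕜} {x : 𝕜}

theorem iteratedDeriv_two_fun_mul (hu : ContDiffAt 𝕜 2 u x) (hv : ContDiffAt 𝕜 2 v x) :
    iteratedDeriv 2 (fun z => u z * v z) x =
      u x * iteratedDeriv 2 v x + 2 * deriv u x * deriv v x + iteratedDeriv 2 u x * v x := by
  simp [iteratedDeriv_fun_mul hu hv, Finset.sum_range_succ, mul_assoc]

theorem iteratedDeriv_succ_fun_id_mul_zero {n : ℕ} (hu : ContDiffAt 𝕜 (n + 1) u 0) :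
    iteratedDeriv (n + 1) (fun z => z * u z) 0 = (n + 1) * iteratedDeriv n u 0 := by
  rw [iteratedDeriv_fun_mul (f := fun z => z) contDiffAt_fun_id hu, Finset.sum_range_succ',
    Finset.sum_range_succ']
  simp [iteratedDeriv_fun_id_zero]

end

theorem iteratedDeriv_two_cexp_comp {g : ℂ → ℂ} {x : ℂ} (hg : AnalyticAt ℂ g x) :
    iteratedDeriv 2 (fun z => exp (g z)) x =
      exp (g x) * (iteratedDeriv 2 g x + deriv g x ^ 2) := by
  have hderiv : deriv (fun z => exp (g z)) =ᶠ[nhds x] fun z => exp (g z) * deriv g z := by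
    filter_upwards [hg.eventually_analyticAt] with z hz
    exact hz.differentiableAt.hasDerivAt.cexp.deriv
  rw [iteratedDeriv_succ, iteratedDeriv_one, hderiv.deriv_eq,
    (hg.differentiableAt.hasDerivAt.cexp.fun_mul hg.deriv.differentiableAt.hasDerivAt).deriv,
    iteratedDeriv_succ, iteratedDeriv_one]
  ring

theorem deriv_cexp_mul_of_eq_zero {k u : ℂ → ℂ} (hk : AnalyticAt ℂ k 0) (hk0 : k 0 = 0)
    (hu : DifferentiableAt ℂ u 0) :
    deriv (fun z => exp (k z) * u z) 0 = deriv k 0 * u 0 + deriv u 0 := by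
  rw [deriv_fun_mul hk.differentiableAt.cexp hu, hk.differentiableAt.hasDerivAt.cexp.deriv, hk0]
  simp

theorem iteratedDeriv_two_cexp_mul_of_eq_zero {k u : ℂ → ℂ} (hk : AnalyticAt ℂ k 0)
    (hk0 : k 0 = 0) (hu : ContDiffAt ℂ 2 u 0) :
    iteratedDeriv 2 (fun z => exp (k z) * u z) 0 =
      iteratedDeriv 2 u 0 + 2 * deriv k 0 * deriv u 0 +
        (iteratedDeriv 2 k 0 + deriv k 0 ^ 2) * u 0 := by
  rw [iteratedDeriv_two_fun_mul (u := fun z => exp (k z)) hk.cexp.contDiffAt hu,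
    iteratedDeriv_two_cexp_comp hk, hk.differentiableAt.hasDerivAt.cexp.deriv, hk0]
  simp

theorem one_sub_conj_mul_ne_zero {a w : ℂ} (ha : ‖a‖ < 1) (hw : ‖w‖ < 1) :
    1 - conj a * w ≠ 0 := by
  refine sub_ne_zero.2 (fun h => ?_)
  have : ‖conj a * w‖ < 1 := by
    rw [norm_mul, norm_conj]
    nlinarith [norm_nonneg a, norm_nonneg w]
  simp [← h] at this

theorem norm_sub_div_one_sub_conj_mul_lt_one {a w : ℂ} (ha : ‖a‖ < 1) (hw : ‖w‖ < 1) :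
    ‖(w - a) / (1 - conj a * w)‖ < 1 := by
  rw [norm_div, div_lt_one (norm_pos_iff.2 (one_sub_conj_mul_ne_zero ha hw)),
    ← sq_lt_sq₀ (norm_nonneg _) (norm_nonneg _), Complex.sq_norm, Complex.sq_norm]
  have key : normSq (1 - conj a * w) - normSq (w - a) = (1 - normSq a) * (1 - normSq w) := by
    simp only [normSq_apply, sub_re, sub_im, mul_re, mul_im, one_re, one_im, conj_re, conj_im]
    ring
  have ha' : normSq a < 1 := by rw [← Complex.sq_norm]; nlinarith [norm_nonneg a]
  have hw' : normSq w < 1 := by rw [← Complex.sq_norm]; nlinarith [norm_nonneg w]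
  nlinarith

theorem one_add_ne_zero_of_re_pos {w : ℂ} (hw : 0 < w.re) : 1 + w ≠ 0 := fun h => by
  have := congrArg re h
  simp only [add_re, one_re, zero_re] at this
  linarith

theorem norm_sub_one_div_one_add_lt_one {w : ℂ} (hw : 0 < w.re) :
    ‖(w - 1) / (1 + w)‖ < 1 := by
  rw [norm_div, div_lt_one (norm_pos_iff.2 (one_add_ne_zero_of_re_pos hw)),
    ← sq_lt_sq₀ (norm_nonneg _) (norm_nonneg _), Complex.sq_norm, Complex.sq_norm]
  simp only [normSq_apply, sub_re, sub_im, add_re, add_im, one_re, one_im]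
  nlinarith

theorem norm_deriv_le_one_sub_sq_of_mapsTo_ball {g : ℂ → ℂ}
    (hg : DifferentiableOn ℂ g (ball 0 1)) (hmaps : MapsTo g (ball 0 1) (ball 0 1)) :
    ‖deriv g 0‖ ≤ 1 - ‖g 0‖ ^ 2 := by
  have h0 : (0 : ℂ) ∈ ball (0 : ℂ) 1 := mem_ball_self one_pos
  set a := g 0
  have ha : ‖a‖ < 1 := mem_ball_zero_iff.1 (hmaps h0)
  have hden : ∀ z ∈ ball (0 : ℂ) 1, 1 - conj a * g z ≠ 0 := fun z hz =>
    one_sub_conj_mul_ne_zero ha (mem_ball_zero_iff.1 (hmaps hz))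
  set u : ℂ → ℂ := fun z => (g z - a) / (1 - conj a * g z)
  have hu : DifferentiableOn ℂ u (ball 0 1) :=
    (hg.sub_const a).div ((differentiableOn_const 1).sub (hg.const_mul _)) hden
  have hu_maps : MapsTo u (ball 0 1) (closedBall (u 0) 1) := fun z hz => by
    simpa [u, a] using (norm_sub_div_one_sub_conj_mul_lt_one ha (mem_ball_zero_iff.1 (hmaps hz))).le
  have hpos : 0 < 1 - ‖a‖ ^ 2 := by nlinarith [norm_nonneg a]
  have hgd := (hg.differentiableAt (isOpen_ball.mem_nhds h0)).hasDerivAt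
  have hu_deriv : deriv u 0 = deriv g 0 / (1 - ‖a‖ ^ 2 : ℝ) := by
    have hconj : 1 - conj a * a = ((1 - ‖a‖ ^ 2 : ℝ) : ℂ) := by
      rw [Complex.sq_norm, mul_comm, mul_conj]; push_cast; ring
    rw [((hgd.sub_const a).fun_div ((hgd.const_mul _).const_sub 1) (hden 0 h0)).deriv, hconj]
    have : ((1 - ‖a‖ ^ 2 : ℝ) : ℂ) ≠ 0 := by exact_mod_cast hpos.ne'
    field_simp
    simp [a]
  have := norm_deriv_le_one_of_mapsTo_ball hu hu_maps one_pos
  rwa [hu_deriv, norm_div, Complex.norm_real, Real.norm_of_nonneg hpos.le, div_le_one hpos] at this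

theorem norm_deriv_le_one_sub_sq_of_mapsTo_closedBall {g : ℂ → ℂ}
    (hg : DifferentiableOn ℂ g (ball 0 1)) (hmaps : MapsTo g (ball 0 1) (closedBall 0 1)) :
    ‖deriv g 0‖ ≤ 1 - ‖g 0‖ ^ 2 := by
  by_cases hopen : MapsTo g (ball 0 1) (ball 0 1)
  · exact norm_deriv_le_one_sub_sq_of_mapsTo_ball hg hopen
  -- otherwise `‖g‖` attains its maximum `1` inside the disk, so `g` is constant
  obtain ⟨z, hz, hgz⟩ : ∃ z ∈ ball (0 : ℂ) 1, ‖g z‖ = 1 := by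
    simp only [MapsTo, not_forall, mem_ball_zero_iff, not_lt] at hopen
    obtain ⟨z, hz, hgz⟩ := hopen
    exact ⟨z, mem_ball_zero_iff.2 hz,
      le_antisymm (mem_closedBall_zero_iff.1 (hmaps (mem_ball_zero_iff.2 hz))) hgz⟩
  have hmax : IsMaxOn (norm ∘ g) (ball 0 1) z := fun w hw => by
    simpa [hgz] using mem_closedBall_zero_iff.1 (hmaps hw)
  have hconst := Complex.eqOn_of_isPreconnected_of_isMaxOn_norm
    (convex_ball (0 : ℂ) 1).isPreconnected isOpen_ball hg hz hmax
  have h0 : (0 : ℂ) ∈ ball (0 : ℂ) 1 := mem_ball_self one_pos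
  have hderiv : deriv g 0 = 0 := by
    rw [(Filter.eventuallyEq_of_mem (isOpen_ball.mem_nhds h0) hconst).deriv_eq]
    exact deriv_const _ _
  simp [hderiv, hconst h0, hgz]

theorem norm_iteratedDeriv_two_le_of_mapsTo_ball {ω : ℂ → ℂ}
    (hω : DifferentiableOn ℂ ω (ball 0 1)) (hmaps : MapsTo ω (ball 0 1) (ball 0 1))
    (h0 : ω 0 = 0) :
    ‖iteratedDeriv 2 ω 0‖ ≤ 2 * (1 - ‖deriv ω 0‖ ^ 2) := by
  set g := dslope ω 0
  have hg : DifferentiableOn ℂ g (ball 0 1) :=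
    (differentiableOn_dslope (isOpen_ball.mem_nhds (mem_ball_self one_pos))).2 hω
  have hg_maps : MapsTo g (ball 0 1) (closedBall 0 1) := fun z hz => by
    have := norm_dslope_le_div_of_mapsTo_ball hω
      (by simpa [h0] using hmaps.mono_right ball_subset_closedBall) hz
    simpa using this
  have hω_eq : ω = fun z => z * g z := funext fun z => by
    simpa [h0] using (sub_smul_dslope ω 0 z).symm
  have hg_cd : ContDiffAt ℂ 2 g 0 :=
    (hg.analyticAt (isOpen_ball.mem_nhds (mem_ball_self one_pos))).contDiffAt
  have h1 : deriv ω 0 = g 0 := by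
    simpa [hω_eq] using iteratedDeriv_succ_fun_id_mul_zero (n := 0) (hg_cd.of_le (by norm_num))
  have h2 : iteratedDeriv 2 ω 0 = 2 * deriv g 0 := by
    simpa [hω_eq, one_add_one_eq_two] using iteratedDeriv_succ_fun_id_mul_zero (n := 1) hg_cd
  rw [h1, h2, norm_mul, Complex.norm_ofNat]
  gcongr
  exact norm_deriv_le_one_sub_sq_of_mapsTo_closedBall hg hg_maps

theorem norm_iteratedDeriv_two_sub_deriv_sq_le_of_re_pos {p : ℂ → ℂ}
    (hp : DifferentiableOn ℂ p (ball 0 1)) (hre : ∀ z ∈ ball (0 : ℂ) 1, 0 < (p z).re)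
    (h0 : p 0 = 1) :
    ‖iteratedDeriv 2 p 0 - deriv p 0 ^ 2‖ ≤ 4 - ‖deriv p 0‖ ^ 2 := by
  have hm : ball (0 : ℂ) 1 ∈ nhds 0 := isOpen_ball.mem_nhds (mem_ball_self one_pos)
  have hne : ∀ z ∈ ball (0 : ℂ) 1, 1 + p z ≠ 0 := fun z hz =>
    one_add_ne_zero_of_re_pos (hre z hz)
  set ω : ℂ → ℂ := fun z => (p z - 1) / (1 + p z)
  have hω : DifferentiableOn ℂ ω (ball 0 1) :=
    (hp.sub_const 1).div ((differentiableOn_const 1).add hp) hne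
  have hω_maps : MapsTo ω (ball 0 1) (ball 0 1) := fun z hz => by
    simpa [ω] using norm_sub_one_div_one_add_lt_one (hre z hz)
  have hp_eq : p =ᶠ[nhds 0] fun z => 1 + ω z * (1 + p z) :=
    Filter.eventually_of_mem hm fun z hz => by
      simp only [ω]; field_simp [hne z hz]; ring
  have hω_cd : ContDiffAt ℂ 2 ω 0 := (hω.analyticAt hm).contDiffAt
  have hp_cd : ContDiffAt ℂ 2 (fun z => 1 + p z) 0 :=
    (analyticAt_const.add (hp.analyticAt hm)).contDiffAt
  have hω0 : ω 0 = 0 := by simp [ω, h0]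
  have h1 : deriv p 0 = 2 * deriv ω 0 := by
    rw [hp_eq.deriv_eq, deriv_const_add, deriv_fun_mul (hω_cd.differentiableAt two_ne_zero)
      (hp_cd.differentiableAt two_ne_zero)]
    simp only [h0, hω0, zero_mul, add_zero]
    ring
  have h2 : iteratedDeriv 2 p 0 = 2 * iteratedDeriv 2 ω 0 + deriv p 0 ^ 2 := by
    rw [hp_eq.iteratedDeriv_eq, iteratedDeriv_const_add (by norm_num),
      iteratedDeriv_two_fun_mul hω_cd hp_cd, deriv_const_add, h1]
    simp only [h0, hω0, zero_mul]
    ring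
  have := norm_iteratedDeriv_two_le_of_mapsTo_ball hω hω_maps hω0
  rw [h2, add_sub_cancel_right, norm_mul, Complex.norm_ofNat, h1, norm_mul, Complex.norm_ofNat]
  linarith

theorem sub_inv_le_of_sq_mul_sq_sub_one_le {s t x y : ℝ} (hs : 0 < s) (hy : 0 ≤ y)
    (ht : t ≤ 2 * s) (h : s ^ 2 * x ^ 2 - 1 ≤ t * y) : x - s⁻¹ ≤ y := by
  rw [sub_le_iff_le_add, ← mul_le_mul_iff_of_pos_left hs, mul_add, mul_inv_cancel₀ hs.ne']
  rcases le_or_gt (s * x) 1 with hsx | hsx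
  · nlinarith
  · nlinarith [mul_le_mul_of_nonneg_right ht hy]

theorem norm_sub_inv_sqrt_le (α : ℝ) {a b : ℂ}
    (h : ‖(α + 2) * b - a ^ 2‖ ≤ 1 - (α + 1) ^ 2 * ‖a‖ ^ 2) :
    ‖a‖ - (√((α + 1) ^ 2 + 1))⁻¹ ≤ ‖b‖ := by
  have hs2 : √((α + 1) ^ 2 + 1) ^ 2 = (α + 1) ^ 2 + 1 := Real.sq_sqrt (by positivity)
  have hs : 0 < √((α + 1) ^ 2 + 1) := Real.sqrt_pos.2 (by positivity)
  refine sub_inv_le_of_sq_mul_sq_sub_one_le hs (norm_nonneg b) (t := |α + 2|)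
    (abs_le_of_sq_le_sq (by nlinarith [sq_nonneg (3 * α + 2)]) (by positivity)) ?_
  have htri := norm_sub_le ((α + 2 : ℂ) * b) ((α + 2 : ℂ) * b - a ^ 2)
  rw [sub_sub_cancel, norm_pow, norm_mul] at htri
  have hnorm : ‖(α + 2 : ℂ)‖ = |α + 2| := by exact_mod_cast Complex.norm_real (α + 2)
  rw [hnorm] at htri
  rw [hs2]
  linarith

noncomputable def caratheodoryFun (α : ℝ) (f h : ℂ → ℂ) : ℂ → ℂ :=
  fun z => exp ((α - 1 : ℂ) * h z) * deriv f z

namespace BazilevicB1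

variable {α : ℝ} {f h : ℂ → ℂ}

theorem analyticAt_zero (hf : BazilevicB1 α f h) : AnalyticAt ℂ h 0 :=
  hf.2.1 0 (mem_ball_self one_pos)

theorem eventuallyEq_mul_exp (hf : BazilevicB1 α f h) : f =ᶠ[nhds 0] fun z => z * exp (h z) :=
  Filter.eventually_of_mem (isOpen_ball.mem_nhds (mem_ball_self one_pos)) hf.2.2.2.2.2.1

theorem iteratedDeriv_two_eq (hf : BazilevicB1 α f h) :
    iteratedDeriv 2 f 0 = 2 * deriv h 0 := by
  obtain ⟨-, -, -, -, hh0, -, -⟩ := id hf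
  have hE : ContDiffAt ℂ 2 (fun z => exp (h z)) 0 := hf.analyticAt_zero.cexp.contDiffAt
  rw [hf.eventuallyEq_mul_exp.iteratedDeriv_eq, iteratedDeriv_succ_fun_id_mul_zero hE,
    iteratedDeriv_one, hf.analyticAt_zero.differentiableAt.hasDerivAt.cexp.deriv, hh0]
  norm_num

theorem iteratedDeriv_three_eq (hf : BazilevicB1 α f h) :
    iteratedDeriv 3 f 0 = 3 * (iteratedDeriv 2 h 0 + deriv h 0 ^ 2) := by
  obtain ⟨-, -, -, -, hh0, -, -⟩ := id hf
  have hE : ContDiffAt ℂ 3 (fun z => exp (h z)) 0 := hf.analyticAt_zero.cexp.contDiffAt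
  rw [hf.eventuallyEq_mul_exp.iteratedDeriv_eq, iteratedDeriv_succ_fun_id_mul_zero hE,
    iteratedDeriv_two_cexp_comp hf.analyticAt_zero, hh0]
  norm_num

theorem coeff2_eq (hf : BazilevicB1 α f h) : coeff2 f = 2 * logCoeff1 h := by
  rw [coeff2, logCoeff1, hf.iteratedDeriv_two_eq]; ring

theorem coeff3_sub_coeff2_sq (hf : BazilevicB1 α f h) :
    coeff3 f - coeff2 f ^ 2 / 2 = 2 * logCoeff2 h := by
  rw [coeff3, coeff2, logCoeff2, hf.iteratedDeriv_two_eq, hf.iteratedDeriv_three_eq]; ring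

theorem differentiableOn_caratheodoryFun (hf : BazilevicB1 α f h) :
    DifferentiableOn ℂ (caratheodoryFun α f h) (ball 0 1) := by
  obtain ⟨hfa, hha, -⟩ := hf
  exact (hha.differentiableOn.const_mul _).cexp.mul hfa.deriv.differentiableOn

theorem deriv_caratheodoryFun (hf : BazilevicB1 α f h) :
    deriv (caratheodoryFun α f h) 0 = (α + 1) * deriv h 0 := by
  obtain ⟨hfa, -, -, hf'0, hh0, -, -⟩ := id hf
  have hf'' : deriv (deriv f) 0 = 2 * deriv h 0 := by
    rw [← hf.iteratedDeriv_two_eq, iteratedDeriv_succ', iteratedDeriv_one]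
  unfold caratheodoryFun
  rw [deriv_cexp_mul_of_eq_zero (analyticAt_const.fun_mul hf.analyticAt_zero)
    (by simp [hh0]) (hfa 0 (mem_ball_self one_pos)).deriv.differentiableAt,
    deriv_const_mul_field, hf'0, hf'']
  ring

theorem iteratedDeriv_two_caratheodoryFun (hf : BazilevicB1 α f h) :
    iteratedDeriv 2 (caratheodoryFun α f h) 0 =
      (α + 2) * iteratedDeriv 2 h 0 + α * (α + 2) * deriv h 0 ^ 2 := by
  obtain ⟨hfa, -, -, hf'0, hh0, -, -⟩ := id hf
  have hf'' : deriv (deriv f) 0 = 2 * deriv h 0 := by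
    rw [← hf.iteratedDeriv_two_eq, iteratedDeriv_succ', iteratedDeriv_one]
  have hf''' : iteratedDeriv 2 (deriv f) 0 = 3 * (iteratedDeriv 2 h 0 + deriv h 0 ^ 2) := by
    rw [← iteratedDeriv_succ', hf.iteratedDeriv_three_eq]
  unfold caratheodoryFun
  rw [iteratedDeriv_two_cexp_mul_of_eq_zero
    (analyticAt_const.fun_mul hf.analyticAt_zero) (by simp [hh0])
    (hfa 0 (mem_ball_self one_pos)).deriv.contDiffAt,
    deriv_const_mul_field, iteratedDeriv_const_mul_field, hf'0, hf'', hf''']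
  ring

theorem norm_logCoeff_sub_le (hf : BazilevicB1 α f h) :
    ‖(α + 2) * logCoeff2 h - logCoeff1 h ^ 2‖ ≤
      1 - (α + 1) ^ 2 * ‖logCoeff1 h‖ ^ 2 := by
  obtain ⟨-, -, -, hf'0, hh0, -, hre⟩ := id hf
  have key := norm_iteratedDeriv_two_sub_deriv_sq_le_of_re_pos
    hf.differentiableOn_caratheodoryFun hre (by simp [caratheodoryFun, hh0, hf'0])
  have e : (α + 2) * iteratedDeriv 2 h 0 + α * (α + 2) * deriv h 0 ^ 2 -
      ((α + 1) * deriv h 0) ^ 2 = 4 * ((α + 2) * logCoeff2 h - logCoeff1 h ^ 2) := by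
    rw [logCoeff1, logCoeff2]; ring
  have hnorm :
      ‖(α + 1 : ℂ) * deriv h 0‖ ^ 2 = 4 * ((α + 1) ^ 2 * ‖logCoeff1 h‖ ^ 2) := by
    have : ‖(α + 1 : ℂ)‖ = |α + 1| := by exact_mod_cast Complex.norm_real (α + 1)
    rw [logCoeff1, norm_mul, norm_div, Complex.norm_ofNat, this, mul_pow, sq_abs]
    ring
  rw [hf.iteratedDeriv_two_caratheodoryFun, hf.deriv_caratheodoryFun, e, hnorm, norm_mul,
    Complex.norm_ofNat] at key
  linarith

end BazilevicB1

theorem stmt_9_general (α : ℝ) (f h : ℂ → ℂ) (hf : BazilevicB1 α f h) :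
    ‖coeff3 f - (coeff2 f) ^ 2 / 2‖ ≥
      ‖coeff2 f‖ - 2 / Real.sqrt ((α + 1) ^ 2 + 1) := by
  have key := norm_sub_inv_sqrt_le α hf.norm_logCoeff_sub_le
  rw [hf.coeff3_sub_coeff2_sq, hf.coeff2_eq, norm_mul, norm_mul, Complex.norm_ofNat, ge_iff_le,
    div_eq_mul_inv]
  linarith

/-- For `α > 0` and `f ∈ B₁(α)`: `|a₃ - a₂²/2| ≥ |a₂| - 2/√((α+1)² + 1)`. -/
theorem stmt_9 (α : ℝ) (hα : 0 < α) (f h : ℂ → ℂ) (hf : BazilevicB1 α f h) :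
    ‖coeff3 f - (coeff2 f) ^ 2 / 2‖ ≥
      ‖coeff2 f‖ - 2 / Real.sqrt ((α + 1) ^ 2 + 1) :=
  stmt_9_general α f h hf
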